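/- For all n ≥ 1 and 1 ≤ k ≤ n, the identity F_n! · F_{n-1}! = F_k! · F_{n-k}! · F_{k-1}! · F_{n-k+1}! · [ (binom(n-1,k-1)_F)^2 + binom(n-1,k)_F · binom(n-1,k-2)_F ] holds in the natural numbers. -/
import Mathlib


/-- The Fibonacci factorial `F_n! = F_n · F_{n-1} · ⋯ · F_1`, with `F_0! = 1`. -/
def fibFact : ℕ → ℕ
  | 0 => 1
  | n + 1 => Nat.fib (n + 1) * fibFact n

/-- The fibonomial coefficient `binom(n,k)_F = F_n!/(F_k!·F_{n-k}!)` for `0 ≤ k ≤ n`,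
and `0` otherwise. Indices are integers so that negative arguments make sense. -/
def fibBinom (n k : ℤ) : ℕ :=
  if 0 ≤ k ∧ k ≤ n then fibFact n.toNat / (fibFact k.toNat * fibFact (n - k).toNat) else 0

lemma fibFact_pos (n : ℕ) : 0 < fibFact n := by
  induction n with
  | zero => simp [fibFact]
  | succ n ih => exact Nat.mul_pos (Nat.fib_pos.mpr (Nat.succ_pos n)) ih

lemma fibFact_dvd : ∀ (m k : ℕ), k ≤ m → fibFact k * fibFact (m - k) ∣ fibFact m := by
  intro m
  induction m with
  | zero => intro k hk; interval_cases k; simp [fibFact]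
  | succ m ih =>
    intro k hk
    rcases Nat.eq_zero_or_pos k with h0 | h1
    · subst h0; simp [fibFact]
    rcases eq_or_lt_of_le hk with he | hlt
    · subst he; simp [fibFact]
    · have hk' : k ≤ m := Nat.lt_succ_iff.mp hlt
      have hfib : Nat.fib (m+1) = Nat.fib k * Nat.fib (m-k) + Nat.fib (k+1) * Nat.fib (m-k+1) := by
        have h := Nat.fib_add k (m - k)
        rw [Nat.add_sub_cancel' hk'] at h
        exact h
      have key : fibFact (m+1) = Nat.fib (k+1) * (Nat.fib (m-k+1) * fibFact m) + Nat.fib k * (Nat.fib (m-k) * fibFact m) := by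
        show Nat.fib (m+1) * fibFact m = _
        rw [hfib]; ring
      rw [key]
      apply dvd_add
      · have h1 : fibFact (m + 1 - k) = Nat.fib (m-k+1) * fibFact (m-k) := by
          have e : m + 1 - k = (m - k) + 1 := by omega
          rw [e]; rfl
        apply Dvd.dvd.mul_left
        have e1 : fibFact k * fibFact (m+1-k) = Nat.fib (m-k+1) * (fibFact k * fibFact (m-k)) := by
          rw [h1]; ring
        rw [e1]
        exact Nat.mul_dvd_mul_left _ (ih k hk')
      · have h2 := ih (k-1) (le_trans (Nat.sub_le k 1) hk')
        have e : m - (k - 1) = m + 1 - k := by omega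
        rw [e] at h2
        have e2 : fibFact k = Nat.fib k * fibFact (k-1) := by
          have : k = (k-1) + 1 := by omega
          rw [this]; rfl
        have e3 : fibFact k * fibFact (m+1-k) = Nat.fib k * (fibFact (k-1) * fibFact (m+1-k)) := by
          rw [e2]; ring
        rw [e3]
        exact Nat.mul_dvd_mul_left _ (h2.mul_left _)

lemma fibBinom_mul (n k : ℤ) (h0 : 0 ≤ k) (h1 : k ≤ n) :
    fibBinom n k * (fibFact k.toNat * fibFact (n - k).toNat) = fibFact n.toNat := by
  rw [fibBinom, if_pos ⟨h0, h1⟩]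
  have e : (n - k).toNat = n.toNat - k.toNat := by omega
  rw [e]
  exact Nat.div_mul_cancel (fibFact_dvd n.toNat k.toNat (by omega))

lemma main_aux (a b A B C : ℕ)
    (hA : A * (fibFact (a+1) * fibFact (b+1)) = fibFact (a+b+2))
    (hB : B * (fibFact (a+2) * fibFact b) = fibFact (a+b+2))
    (hC : C * (fibFact a * fibFact (b+2)) = fibFact (a+b+2)) :
    fibFact (a+b+3) * fibFact (a+b+2) =
      fibFact (a+2) * fibFact (b+1) * fibFact (a+1) * fibFact (b+2) * (A^2 + B*C) := by
  have ea2 : fibFact (a+2) = Nat.fib (a+2) * (Nat.fib (a+1) * fibFact a) := rfl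
  have ea1 : fibFact (a+1) = Nat.fib (a+1) * fibFact a := rfl
  have eb2 : fibFact (b+2) = Nat.fib (b+2) * (Nat.fib (b+1) * fibFact b) := rfl
  have eb1 : fibFact (b+1) = Nat.fib (b+1) * fibFact b := rfl
  have en : fibFact (a+b+3) = Nat.fib (a+b+3) * fibFact (a+b+2) := rfl
  have hfib : Nat.fib (a+b+3) = Nat.fib (a+1) * Nat.fib (b+1) + Nat.fib (a+2) * Nat.fib (b+2) := by
    have h := Nat.fib_add (a+1) (b+1)
    have e : (a+1) + (b+1) + 1 = a+b+3 := by ring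
    rw [e] at h
    exact h
  calc fibFact (a+b+3) * fibFact (a+b+2)
      = Nat.fib (a+2) * Nat.fib (b+2) * (A * (fibFact (a+1) * fibFact (b+1)))^2
        + Nat.fib (a+1) * Nat.fib (b+1) *
          ((B * (fibFact (a+2) * fibFact b)) * (C * (fibFact a * fibFact (b+2)))) := by
        rw [hA, hB, hC, en, hfib]; ring
    _ = fibFact (a+2) * fibFact (b+1) * fibFact (a+1) * fibFact (b+2) * (A^2 + B*C) := by
        rw [ea2, ea1, eb2, eb1]; ring


theorem fiboNarayana_factorial_identity (n k : ℤ) (hn : 1 ≤ n) (hk : 1 ≤ k) (hkn : k ≤ n) :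
    fibFact n.toNat * fibFact (n - 1).toNat =
      fibFact k.toNat * fibFact (n - k).toNat * fibFact (k - 1).toNat *
          fibFact (n - k + 1).toNat *
        (fibBinom (n - 1) (k - 1) ^ 2 + fibBinom (n - 1) k * fibBinom (n - 1) (k - 2)) := by
  rcases eq_or_lt_of_le hk with hk1 | hk2
  · -- k = 1
    subst hk1
    have e1 : ((1:ℤ)-1) = 0 := by norm_num
    have e2 : ((1:ℤ)-2) = -1 := by norm_num
    have e3 : (n - 1 + 1) = n := by ring
    rw [e1, e2, e3]
    have hz : fibBinom (n-1) (-1) = 0 := by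
      rw [fibBinom, if_neg]; push_neg; intro h; omega
    have ho : fibBinom (n-1) 0 = 1 := by
      rw [fibBinom, if_pos ⟨le_refl 0, by omega⟩]
      simp [fibFact, Nat.div_self (fibFact_pos _)]
    rw [hz, ho]
    have : ((1:ℤ)).toNat = 1 := rfl
    simp [this, fibFact]
    ring
  · rcases eq_or_lt_of_le hkn with hkn' | hlt
    · -- k = n
      subst hkn'
      have hz : fibBinom (k-1) k = 0 := by
        rw [fibBinom, if_neg]; push_neg; intro h; omega
      have ho : fibBinom (k-1) (k-1) = 1 := by
        rw [fibBinom, if_pos ⟨by omega, le_refl _⟩]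
        simp [fibFact, Nat.div_self (fibFact_pos _)]
      rw [hz, ho]
      have e1 : (k - k) = (0:ℤ) := by ring
      have e2 : (k - k + 1) = (1:ℤ) := by ring
      rw [e1]
      simp [fibFact]
      try ring
    · -- 2 ≤ k ≤ n - 1
      obtain ⟨a, ha⟩ : ∃ a : ℕ, k = (a : ℤ) + 2 := ⟨(k-2).toNat, by omega⟩
      obtain ⟨b, hb⟩ : ∃ b : ℕ, n = k + (b : ℤ) + 1 := ⟨(n-k-1).toNat, by omega⟩
      have hA := fibBinom_mul (n-1) (k-1) (by omega) (by omega)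
      have hB := fibBinom_mul (n-1) k (by omega) (by omega)
      have hC := fibBinom_mul (n-1) (k-2) (by omega) (by omega)
      have t1 : (k-1).toNat = a+1 := by omega
      have t2 : (n-1-(k-1)).toNat = b+1 := by omega
      have t3 : (n-1).toNat = a+b+2 := by omega
      have t4 : k.toNat = a+2 := by omega
      have t5 : (n-1-k).toNat = b := by omega
      have t6 : (k-2).toNat = a := by omega
      have t7 : (n-1-(k-2)).toNat = b+2 := by omega
      have t8 : n.toNat = a+b+3 := by omega
      have t9 : (n-k).toNat = b+1 := by omega
      have t10 : (n-k+1).toNat = b+2 := by omega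
      rw [t1, t2, t3] at hA
      rw [t4, t5, t3] at hB
      rw [t6, t7, t3] at hC
      rw [t8, t3, t4, t9, t1, t10]
      exact main_aux a b _ _ _ hA hB hC
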